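/- arXiv:2208.02618 — 3 statements merged into one kernel-verified Lean document; each statement's English description precedes it below -/
import Mathlib

section
/- For every complex number $z$, $\sum_{n=1}^{\infty} R(z/n^2) = z e^{-z}$, where $R(z) = \sum_{m=1}^{\infty} \frac{(-1)^{m+1}}{(m-1)!\,\zeta(2m)} z^m$ is the Riesz function. (The double series converges absolutely, justifying interchange of summation.) -/
noncomputable def Riesz (z : ℂ) : ℂ :=
  ∑' m : ℕ, (-1) ^ (m + 2) / ((m.factorial : ℂ) * riemannZeta (2 * (m + 1))) * z ^ (m + 1)

open Complex

namespace RieszAux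

lemma cast_eq (m : ℕ) : (2 : ℂ) * ((m : ℂ) + 1) = ((2 * (m + 1) : ℕ) : ℂ) := by
  push_cast; ring

lemma re_big (m : ℕ) : 1 < ((2 : ℂ) * ((m : ℂ) + 1)).re := by
  rw [cast_eq]
  rw [Complex.natCast_re]
  exact_mod_cast Nat.lt_of_lt_of_le one_lt_two (by omega)

lemma summable_real (m : ℕ) :
    Summable fun n : ℕ => (1 : ℝ) / ((n : ℝ) + 1) ^ (2 * (m + 1)) := by
  have h : Summable fun n : ℕ => (1 : ℝ) / ((n : ℝ)) ^ (2 * (m + 1)) :=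
    Real.summable_one_div_nat_pow.mpr (by omega)
  have := (summable_nat_add_iff 1).mpr h
  refine this.congr fun n => ?_
  push_cast
  ring_nf

lemma zeta_eq (m : ℕ) :
    riemannZeta ((2 : ℂ) * ((m : ℂ) + 1)) =
      ((∑' n : ℕ, (1 : ℝ) / ((n : ℝ) + 1) ^ (2 * (m + 1)) : ℝ) : ℂ) := by
  rw [zeta_eq_tsum_one_div_nat_add_one_cpow (re_big m), Complex.ofReal_tsum]
  refine tsum_congr fun n => ?_
  rw [cast_eq, Complex.cpow_natCast]
  push_cast
  ring

lemma zeta_real_ge_one (m : ℕ) :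
    (1 : ℝ) ≤ ∑' n : ℕ, (1 : ℝ) / ((n : ℝ) + 1) ^ (2 * (m + 1)) := by
  have := Summable.le_tsum (summable_real m) 0 (fun n _ => by positivity)
  simpa using this

lemma zeta_ne (m : ℕ) : riemannZeta ((2 : ℂ) * ((m : ℂ) + 1)) ≠ 0 :=
  riemannZeta_ne_zero_of_one_lt_re (re_big m)

lemma norm_zeta_ge_one (m : ℕ) : (1 : ℝ) ≤ ‖riemannZeta ((2 : ℂ) * ((m : ℂ) + 1))‖ := by
  rw [zeta_eq, Complex.norm_real, Real.norm_eq_abs,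
    _root_.abs_of_nonneg (le_trans zero_le_one (zeta_real_ge_one m))]
  exact zeta_real_ge_one m

end RieszAux

theorem tsum_riesz_eq (z : ℂ) :
    Summable (fun n : ℕ => Riesz (z / ((n : ℂ) + 1) ^ 2)) ∧
    ∑' n : ℕ, Riesz (z / ((n : ℂ) + 1) ^ 2) = z * Complex.exp (-z) := by
  open RieszAux in
  -- the double-indexed family
  set c : ℕ → ℂ := fun m => (-1) ^ (m + 2) / ((m.factorial : ℂ) * riemannZeta (2 * ((m : ℂ) + 1)))
    with hc
  set F : ℕ × ℕ → ℂ := fun p => c p.2 * (z / ((p.1 : ℂ) + 1) ^ 2) ^ (p.2 + 1) with hF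
  have hRiesz : ∀ n : ℕ, Riesz (z / ((n : ℂ) + 1) ^ 2) = ∑' m : ℕ, F (n, m) := by
    intro n
    exact tsum_congr fun m => rfl
  -- norm bound
  have hnorm : ∀ p : ℕ × ℕ,
      ‖F p‖ ≤ (‖z‖ ^ (p.2 + 1) / (p.2.factorial : ℝ)) * ((1 : ℝ) / ((p.1 : ℝ) + 1) ^ 2) := by
    rintro ⟨n, m⟩
    have hn1 : (1 : ℝ) ≤ ((n : ℝ) + 1) := by nlinarith [Nat.cast_nonneg (α := ℝ) n]
    have hfac : (0 : ℝ) < (m.factorial : ℝ) := by exact_mod_cast m.factorial_pos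
    have hcm : ‖c m‖ ≤ 1 / (m.factorial : ℝ) := by
      have hceq : ‖c m‖ = 1 / ((m.factorial : ℝ) * ‖riemannZeta ((2:ℂ) * ((m:ℂ) + 1))‖) := by
        rw [hc]
        simp only [norm_div, norm_mul, norm_pow, norm_neg, norm_one, one_pow]
        rw [Complex.norm_natCast]
      rw [hceq]
      apply one_div_le_one_div_of_le hfac
      exact le_mul_of_one_le_right hfac.le (norm_zeta_ge_one m)
    have hw : ‖(z / ((n : ℂ) + 1) ^ 2) ^ (m + 1)‖ ≤ ‖z‖ ^ (m + 1) * (1 / ((n : ℝ) + 1) ^ 2) := by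
      have hnn : ‖(n : ℂ) + 1‖ = (n : ℝ) + 1 := by
        rw [show ((n : ℂ) + 1) = (((n + 1 : ℕ) : ℕ) : ℂ) by push_cast; ring,
          Complex.norm_natCast]
        push_cast; ring
      rw [norm_pow, norm_div, norm_pow, hnn, div_pow, ← pow_mul]
      rw [mul_one_div]
      apply div_le_div_of_nonneg_left (by positivity) (by positivity)
      calc ((n : ℝ) + 1) ^ 2 = (((n : ℝ) + 1) ^ 2) ^ 1 := (pow_one _).symm
        _ ≤ (((n : ℝ) + 1) ^ 2) ^ (m + 1) := by
            apply pow_le_pow_right₀ (by nlinarith [Nat.cast_nonneg (α := ℝ) n]) (by omega)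
        _ = ((n : ℝ) + 1) ^ (2 * (m + 1)) := by rw [← pow_mul]
    calc ‖F (n, m)‖ = ‖c m‖ * ‖(z / ((n : ℂ) + 1) ^ 2) ^ (m + 1)‖ := norm_mul _ _
      _ ≤ (1 / (m.factorial : ℝ)) * (‖z‖ ^ (m + 1) * (1 / ((n : ℝ) + 1) ^ 2)) := by
          exact mul_le_mul hcm hw (norm_nonneg _) (by positivity)
      _ = (‖z‖ ^ (m + 1) / (m.factorial : ℝ)) * ((1 : ℝ) / ((n : ℝ) + 1) ^ 2) := by ring
  -- summability of the bounding family
  have ha : Summable fun m : ℕ => ‖z‖ ^ (m + 1) / (m.factorial : ℝ) := by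
    have := (Real.summable_pow_div_factorial ‖z‖).mul_left ‖z‖
    refine this.congr fun m => ?_
    rw [pow_succ]
    ring
  have hb : Summable fun n : ℕ => (1 : ℝ) / ((n : ℝ) + 1) ^ 2 := by
    have := summable_real 0
    simpa using this
  have hbound : Summable fun p : ℕ × ℕ =>
      (‖z‖ ^ (p.2 + 1) / (p.2.factorial : ℝ)) * ((1 : ℝ) / ((p.1 : ℝ) + 1) ^ 2) := by
    have := hb.mul_of_nonneg ha (fun n => by positivity) (fun m => by positivity)
    exact this.congr fun p => by ring
  have hFsum : Summable F :=
    Summable.of_norm (Summable.of_nonneg_of_le (fun _ => norm_nonneg _) hnorm hbound)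
  -- fiberwise summability
  have hfiber : ∀ n : ℕ, Summable fun m : ℕ => F (n, m) := fun n =>
    hFsum.comp_injective (fun m₁ m₂ h => by simpa using congrArg Prod.snd h :
      Function.Injective fun m : ℕ => ((n, m) : ℕ × ℕ))
  have hfiber' : ∀ m : ℕ, Summable fun n : ℕ => F (n, m) := fun m =>
    hFsum.comp_injective (fun n₁ n₂ h => by simpa using congrArg Prod.fst h :
      Function.Injective fun n : ℕ => ((n, m) : ℕ × ℕ))
  -- first conjunct
  have hsum1 : Summable (fun n : ℕ => Riesz (z / ((n : ℂ) + 1) ^ 2)) := by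
    have : HasSum (fun n : ℕ => ∑' m : ℕ, F (n, m)) (∑' p, F p) :=
      hFsum.hasSum.prod_fiberwise fun n => (hfiber n).hasSum
    exact this.summable.congr fun n => (hRiesz n).symm
  refine ⟨hsum1, ?_⟩
  -- interchange
  have hswap : ∑' n : ℕ, Riesz (z / ((n : ℂ) + 1) ^ 2) = ∑' m : ℕ, ∑' n : ℕ, F (n, m) := by
    calc ∑' n : ℕ, Riesz (z / ((n : ℂ) + 1) ^ 2) = ∑' n : ℕ, ∑' m : ℕ, F (n, m) :=
          tsum_congr hRiesz
      _ = ∑' m : ℕ, ∑' n : ℕ, F (n, m) := by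
          have hG : Summable (Function.uncurry fun (n m : ℕ) => F (n, m)) := by
            exact hFsum
          exact (Summable.tsum_comm' hG hfiber hfiber').symm
  rw [hswap]
  -- inner sum
  have hinner : ∀ m : ℕ, ∑' n : ℕ, F (n, m) = (-1) ^ (m + 2) / (m.factorial : ℂ) * z ^ (m + 1) := by
    intro m
    have hterm : ∀ n : ℕ, F (n, m) =
        (c m * z ^ (m + 1)) * ((1 : ℂ) / ((n : ℂ) + 1) ^ (2 * (m + 1))) := by
      intro n
      have hne : ((n : ℂ) + 1) ≠ 0 := by
        intro h
        have : ((n : ℝ) + 1 : ℝ) = 0 := by exact_mod_cast congrArg Complex.re h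
        nlinarith [Nat.cast_nonneg (α := ℝ) n]
      simp only [hF]
      rw [div_pow, ← pow_mul]
      ring
    rw [tsum_congr hterm, tsum_mul_left]
    have hz : ∑' n : ℕ, (1 : ℂ) / ((n : ℂ) + 1) ^ (2 * (m + 1)) =
        riemannZeta ((2 : ℂ) * ((m : ℂ) + 1)) := by
      rw [zeta_eq_tsum_one_div_nat_add_one_cpow (re_big m)]
      refine tsum_congr fun n => ?_
      rw [RieszAux.cast_eq, Complex.cpow_natCast]
    rw [hz, hc]
    have hfacne : ((m.factorial : ℂ)) ≠ 0 := by exact_mod_cast m.factorial_ne_zero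
    have hzne := RieszAux.zeta_ne m
    have key : ∀ a w : ℂ,
        a / ((m.factorial : ℂ) * riemannZeta ((2 : ℂ) * ((m : ℂ) + 1))) * w *
          riemannZeta ((2 : ℂ) * ((m : ℂ) + 1)) = a / (m.factorial : ℂ) * w := by
      intro a w
      field_simp
    exact key _ _
  rw [tsum_congr hinner]
  -- final exponential series
  have hterm2 : ∀ m : ℕ, (-1 : ℂ) ^ (m + 2) / (m.factorial : ℂ) * z ^ (m + 1) =
      z * ((-z) ^ m / (m.factorial : ℂ)) := by
    intro m
    have h1 : (-1 : ℂ) ^ (m + 2) = (-1) ^ m := by rw [pow_add]; norm_num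
    rw [h1, neg_pow]
    ring
  rw [tsum_congr hterm2, tsum_mul_left]
  congr 1
  rw [Complex.exp_eq_exp_ℂ, NormedSpace.exp_eq_tsum_div]
end

section
/- For real $s$ with $0 < s < 1$ and real $a > 0$, $\int_0^{\infty} x^{s-1} \cos(ax)\, dx = a^{-s}\, \Gamma(s) \cos(\pi s / 2)$, where the integral is interpreted as an improper Riemann integral. -/
/-!
Write `x ^ (s - 1) = Γ(1 - s)⁻¹ ∫₀^∞ t ^ (-s) e^(-t x) dt` and exchange the integrals: the
truncated integral becomes `Γ(1 - s)⁻¹ ∫₀^∞ t ^ (-s) (∫₀^T e^(-t x) cos (a x) dx) dt`.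
The inner integral is elementary and tends, boundedly in `T`, to `t / (t² + a²)`, so by
dominated convergence the limit is `Γ(1 - s)⁻¹ ∫₀^∞ t ^ (1 - s) / (t² + a²) dt`.
Writing `1 / (t² + a²)` as `∫₀^∞ e^(-(t² + a²) y) dy` and exchanging again splits this into
two Gamma integrals, `a ^ (-s) Γ(s/2) Γ(1 - s/2) / 2`, and the reflection formula (twice)
gives the closed form.
-/

open MeasureTheory Set Real Filter Topology

lemma integrableOn_rpow_div_sq_add_sq {p a : ℝ} (hp : -1 < p) (hp1 : p < 1) (ha : a ≠ 0) :
    IntegrableOn (fun t : ℝ => t ^ p / (t ^ 2 + a ^ 2)) (Ioi 0) := by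
  have hmeas : AEStronglyMeasurable (fun t : ℝ => t ^ p / (t ^ 2 + a ^ 2))
      (volume.restrict (Ioi 0)) := (by fun_prop : Measurable _).aestronglyMeasurable
  rw [← Ioc_union_Ioi_eq_Ioi zero_le_one]
  refine IntegrableOn.union ?_ ?_
  · refine Integrable.mono ((intervalIntegral.intervalIntegrable_rpow' hp).1.div_const (a ^ 2))
      (hmeas.mono_set Ioc_subset_Ioi_self) ?_
    filter_upwards [ae_restrict_mem measurableSet_Ioc] with t ht
    have h0 : 0 < t := ht.1
    rw [norm_of_nonneg (by positivity), norm_of_nonneg (by positivity)]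
    gcongr
    exact le_add_of_nonneg_left (sq_nonneg t)
  · refine Integrable.mono (integrableOn_Ioi_rpow_of_lt (by linarith : p - 2 < -1) one_pos)
      (hmeas.mono_set (Ioi_subset_Ioi zero_le_one)) ?_
    filter_upwards [ae_restrict_mem measurableSet_Ioi] with t (ht : 1 < t)
    have h0 : 0 < t := by linarith
    rw [norm_of_nonneg (by positivity), norm_of_nonneg (by positivity),
      show p - 2 = p - (2 : ℕ) by norm_num, rpow_sub_natCast h0.ne']
    gcongr
    exact le_add_of_nonneg_right (sq_nonneg a)

lemma integrableOn_rpow_neg_mul_exp_neg_mul {s x : ℝ} (hs : s < 1) (hx : 0 < x) :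
    IntegrableOn (fun t : ℝ => t ^ (-s) * exp (-(t * x))) (Ioi 0) := by
  refine IntegrableOn.congr_fun
    (integrableOn_rpow_mul_exp_neg_mul_rpow (s := -s) (p := 1) (by linarith) one_pos hx)
    (fun t _ => ?_) measurableSet_Ioi
  simp only [rpow_one, neg_mul, mul_comm x]

lemma integral_rpow_neg_mul_exp_neg_mul_Ioi {s x : ℝ} (hs : s < 1) (hx : 0 < x) :
    ∫ t in Ioi (0 : ℝ), t ^ (-s) * exp (-(t * x)) = Gamma (1 - s) * x ^ (s - 1) := by
  have h := integral_rpow_mul_exp_neg_mul_Ioi (a := 1 - s) (by linarith) hx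
  rw [show 1 - s - 1 = -s by ring, one_div, inv_rpow hx.le, ← rpow_neg hx.le, neg_sub] at h
  simpa only [mul_comm x, mul_comm (Gamma _)] using h

lemma intervalIntegral_rpow_mul_eq_integral_Ioi {s T : ℝ} {g : ℝ → ℝ} (hs : 0 < s)
    (hs1 : s < 1) (hg : Continuous g) (hT : 0 ≤ T) :
    ∫ x in (0 : ℝ)..T, x ^ (s - 1) * g x =
      (Gamma (1 - s))⁻¹ *
        ∫ t in Ioi (0 : ℝ), t ^ (-s) * ∫ x in (0 : ℝ)..T, exp (-(t * x)) * g x := by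
  have hΓ : Gamma (1 - s) ≠ 0 := (Gamma_pos_of_pos (by linarith)).ne'
  set f : ℝ → ℝ → ℝ := fun x t => t ^ (-s) * exp (-(t * x)) * g x
  have hf : ∀ x, 0 < x → ∫ t in Ioi (0 : ℝ), f x t = Gamma (1 - s) * x ^ (s - 1) * g x :=
    fun x hx => by rw [integral_mul_const, integral_rpow_neg_mul_exp_neg_mul_Ioi hs1 hx]
  have hint : Integrable (Function.uncurry f)
      ((volume.restrict (uIoc 0 T)).prod (volume.restrict (Ioi 0))) := by
    rw [uIoc_of_le hT, integrable_prod_iff (by fun_prop)]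
    refine ⟨?_, ?_⟩
    · filter_upwards [ae_restrict_mem measurableSet_Ioc] with x hx
      exact (integrableOn_rpow_neg_mul_exp_neg_mul hs1 hx.1).mul_const (g x)
    · have hnorm : ∀ x ∈ Ioc (0 : ℝ) T,
          ∫ t in Ioi (0 : ℝ), ‖f x t‖ = Gamma (1 - s) * x ^ (s - 1) * |g x| := by
        intro x hx
        rw [← integral_rpow_neg_mul_exp_neg_mul_Ioi hs1 hx.1, ← integral_mul_const]
        refine setIntegral_congr_fun measurableSet_Ioi fun t (ht : 0 < t) => ?_
        simp only [f, norm_mul, norm_of_nonneg (rpow_nonneg ht.le _), norm_of_nonneg (exp_pos _).le,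
          Real.norm_eq_abs]
      have hbound : IntegrableOn (fun x => Gamma (1 - s) * x ^ (s - 1) * |g x|) (Ioc 0 T) :=
        IntegrableOn.mul_continuousOn_of_subset
          ((intervalIntegral.intervalIntegrable_rpow' (by linarith : -1 < s - 1)).1.const_mul _)
          hg.abs.continuousOn measurableSet_Ioc isCompact_Icc Ioc_subset_Icc_self
      exact hbound.congr_fun (fun x hx => (hnorm x hx).symm) measurableSet_Ioc
  calc ∫ x in (0 : ℝ)..T, x ^ (s - 1) * g x
      = ∫ x in (0 : ℝ)..T, (Gamma (1 - s))⁻¹ * ∫ t in Ioi (0 : ℝ), f x t := by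
        refine intervalIntegral.integral_congr_ae (ae_of_all _ fun x hx => ?_)
        rw [uIoc_of_le hT] at hx
        rw [hf x hx.1]
        field_simp
    _ = (Gamma (1 - s))⁻¹ * ∫ t in Ioi (0 : ℝ), ∫ x in (0 : ℝ)..T, f x t := by
        rw [intervalIntegral.integral_const_mul, intervalIntegral_integral_swap hint]
    _ = _ := by
        simp only [f, mul_assoc, intervalIntegral.integral_const_mul]

lemma integral_exp_neg_mul_mul_cos (a t T : ℝ) (h : t ^ 2 + a ^ 2 ≠ 0) :
    ∫ x in (0 : ℝ)..T, exp (-(t * x)) * cos (a * x) =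
      (t + exp (-(t * T)) * (a * sin (a * T) - t * cos (a * T))) / (t ^ 2 + a ^ 2) := by
  have hderiv : ∀ x, HasDerivAt
      (fun x => exp (-(t * x)) * (a * sin (a * x) - t * cos (a * x)) / (t ^ 2 + a ^ 2))
      (exp (-(t * x)) * cos (a * x)) x := by
    intro x
    have hexp : HasDerivAt (fun x => exp (-(t * x))) (exp (-(t * x)) * -t) x := by
      simpa using ((hasDerivAt_id x).const_mul t).neg.exp
    have hsin : HasDerivAt (fun x => sin (a * x)) (cos (a * x) * a) x := by
      simpa using ((hasDerivAt_id x).const_mul a).sin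
    have hcos : HasDerivAt (fun x => cos (a * x)) (-sin (a * x) * a) x := by
      simpa using ((hasDerivAt_id x).const_mul a).cos
    refine ((hexp.mul ((hsin.const_mul a).sub (hcos.const_mul t))).div_const _).congr_deriv ?_
    rw [Pi.sub_apply, div_eq_iff h]
    ring
  rw [intervalIntegral.integral_eq_sub_of_hasDerivAt (fun x _ => hderiv x)
    ((by fun_prop : Continuous fun x => exp (-(t * x)) * cos (a * x)).intervalIntegrable _ _)]
  simp only [mul_zero, neg_zero, exp_zero, sin_zero, cos_zero, one_mul]
  ring

lemma abs_mul_sin_sub_mul_cos_le (a t u : ℝ) : |a * sin u - t * cos u| ≤ |a| + |t| := by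
  calc |a * sin u - t * cos u| ≤ |a| * |sin u| + |t| * |cos u| := by
        simpa only [abs_mul] using abs_sub (a * sin u) (t * cos u)
    _ ≤ |a| * 1 + |t| * 1 := by gcongr; exacts [abs_sin_le_one u, abs_cos_le_one u]
    _ = |a| + |t| := by ring

lemma tendsto_integral_exp_neg_mul_mul_cos (a : ℝ) {t : ℝ} (ht : 0 < t) :
    Tendsto (fun T => ∫ x in (0 : ℝ)..T, exp (-(t * x)) * cos (a * x)) atTop
      (𝓝 (t / (t ^ 2 + a ^ 2))) := by
  have hdecay : Tendsto (fun T => exp (-(t * T)) * (a * sin (a * T) - t * cos (a * T))) atTop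
      (𝓝 0) := by
    have hexp : Tendsto (fun T => exp (-(t * T)) * (|a| + |t|)) atTop (𝓝 0) := by
      simpa using (tendsto_exp_neg_atTop_nhds_zero.comp
        (tendsto_id.const_mul_atTop ht)).mul_const (|a| + |t|)
    refine squeeze_zero_norm (fun T => ?_) hexp
    rw [norm_mul, norm_of_nonneg (exp_pos _).le, Real.norm_eq_abs]
    exact mul_le_mul_of_nonneg_left (abs_mul_sin_sub_mul_cos_le a t _) (exp_pos _).le
  have hpos : t ^ 2 + a ^ 2 ≠ 0 := by positivity
  simp only [integral_exp_neg_mul_mul_cos a t _ hpos]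
  simpa using (hdecay.const_add t).div_const (t ^ 2 + a ^ 2)

lemma abs_integral_exp_neg_mul_mul_cos_le (a : ℝ) {t T : ℝ} (ht : 0 < t) (hT : 0 ≤ T) :
    |∫ x in (0 : ℝ)..T, exp (-(t * x)) * cos (a * x)| ≤ (|a| + 2 * t) / (t ^ 2 + a ^ 2) := by
  have hpos : 0 < t ^ 2 + a ^ 2 := by positivity
  have hexp : exp (-(t * T)) ≤ 1 := exp_le_one_iff.mpr (by nlinarith)
  rw [integral_exp_neg_mul_mul_cos a t T hpos.ne', abs_div, abs_of_pos hpos]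
  gcongr
  calc |t + exp (-(t * T)) * (a * sin (a * T) - t * cos (a * T))|
      ≤ |t| + exp (-(t * T)) * |a * sin (a * T) - t * cos (a * T)| := by
        rw [← abs_of_pos (exp_pos (-(t * T))), ← abs_mul, abs_of_pos (exp_pos _)]
        exact abs_add_le _ _
    _ ≤ t + 1 * (|a| + t) := by
        rw [abs_of_pos ht]
        gcongr
        simpa only [abs_of_pos ht] using abs_mul_sin_sub_mul_cos_le a t (a * T)
    _ = |a| + 2 * t := by ring

lemma tendsto_integral_rpow_neg_mul_integral_exp_neg_mul_mul_cos {s a : ℝ} (hs : 0 < s)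
    (hs1 : s < 1) (ha : a ≠ 0) :
    Tendsto
      (fun T => ∫ t in Ioi (0 : ℝ),
        t ^ (-s) * ∫ x in (0 : ℝ)..T, exp (-(t * x)) * cos (a * x))
      atTop (𝓝 (∫ t in Ioi (0 : ℝ), t ^ (1 - s) / (t ^ 2 + a ^ 2))) := by
  have hrpow : ∀ t : ℝ, 0 < t → t ^ (-s) * t = t ^ (1 - s) := fun t ht => by
    rw [← rpow_add_one ht.ne', neg_add_eq_sub]
  refine tendsto_integral_filter_of_dominated_convergence
    (fun t => t ^ (-s) * ((|a| + 2 * t) / (t ^ 2 + a ^ 2))) ?_ ?_ ?_ ?_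
  · refine Eventually.of_forall fun T => Measurable.aestronglyMeasurable ?_
    exact (measurable_id.pow_const _).mul
      (intervalIntegral.continuous_parametric_intervalIntegral_of_continuous'
        (by fun_prop) 0 T).measurable
  · filter_upwards [eventually_ge_atTop 0] with T hT
    filter_upwards [ae_restrict_mem measurableSet_Ioi] with t (ht : 0 < t)
    rw [norm_mul, norm_of_nonneg (rpow_nonneg ht.le _), Real.norm_eq_abs]
    exact mul_le_mul_of_nonneg_left (abs_integral_exp_neg_mul_mul_cos_le a ht hT)
      (rpow_nonneg ht.le _)
  · have hint :=
      ((integrableOn_rpow_div_sq_add_sq (p := -s) (by linarith) (by linarith) ha).const_mul |a|).add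
        ((integrableOn_rpow_div_sq_add_sq (p := 1 - s) (by linarith) (by linarith) ha).const_mul 2)
    refine IntegrableOn.congr_fun hint (fun t (ht : 0 < t) => ?_) measurableSet_Ioi
    rw [Pi.add_apply, ← hrpow t ht]
    ring
  · filter_upwards [ae_restrict_mem measurableSet_Ioi] with t (ht : 0 < t)
    rw [← hrpow t ht, mul_div_assoc]
    exact (tendsto_integral_exp_neg_mul_mul_cos a ht).const_mul _

lemma integral_rpow_mul_exp_neg_sq_add_sq_mul {s a y : ℝ} (hs2 : s < 2) (hy : 0 < y) :
    ∫ t in Ioi (0 : ℝ), t ^ (1 - s) * exp (-(t ^ 2 + a ^ 2) * y) =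
      Gamma (1 - s / 2) / 2 * (y ^ (s / 2 - 1) * exp (-(a ^ 2 * y))) := by
  have h := integral_rpow_mul_exp_neg_mul_rpow (p := 2) (q := 1 - s) two_pos (by linarith) hy
  rw [show -(1 - s + 1) / 2 = s / 2 - 1 by ring, show (1 - s + 1) / 2 = 1 - s / 2 by ring] at h
  rw [show Gamma (1 - s / 2) / 2 * (y ^ (s / 2 - 1) * exp (-(a ^ 2 * y))) =
    exp (-(a ^ 2 * y)) * (y ^ (s / 2 - 1) * (1 / 2) * Gamma (1 - s / 2)) by ring, ← h,
    ← integral_const_mul]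
  refine setIntegral_congr_fun measurableSet_Ioi fun t _ => ?_
  rw [rpow_two, mul_left_comm, ← exp_add]
  ring_nf

lemma integral_rpow_div_sq_add_sq {s a : ℝ} (hs : 0 < s) (hs2 : s < 2) (ha : 0 < a) :
    ∫ t in Ioi (0 : ℝ), t ^ (1 - s) / (t ^ 2 + a ^ 2) =
      a ^ (-s) * (π / (2 * sin (π * s / 2))) := by
  set F : ℝ → ℝ → ℝ := fun t y => t ^ (1 - s) * exp (-(t ^ 2 + a ^ 2) * y)
  have hF : ∀ t, ∫ y in Ioi (0 : ℝ), F t y = t ^ (1 - s) / (t ^ 2 + a ^ 2) := fun t => by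
    have hpos : 0 < t ^ 2 + a ^ 2 := by positivity
    rw [integral_const_mul, integral_exp_mul_Ioi (by linarith) 0]
    field_simp
    simp
  have hint : Integrable (Function.uncurry F)
      ((volume.restrict (Ioi 0)).prod (volume.restrict (Ioi 0))) := by
    rw [integrable_prod_iff (by fun_prop)]
    refine ⟨Eventually.of_forall fun t =>
      (integrableOn_exp_mul_Ioi (neg_neg_of_pos (by positivity : 0 < t ^ 2 + a ^ 2)) 0).const_mul
        (t ^ (1 - s)), ?_⟩
    refine IntegrableOn.congr_fun
      (integrableOn_rpow_div_sq_add_sq (p := 1 - s) (by linarith) (by linarith) ha.ne')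
      (fun t (ht : 0 < t) => ?_) measurableSet_Ioi
    rw [← hF]
    refine setIntegral_congr_fun measurableSet_Ioi fun y _ => ?_
    exact (norm_of_nonneg (by positivity)).symm
  calc ∫ t in Ioi (0 : ℝ), t ^ (1 - s) / (t ^ 2 + a ^ 2)
      = ∫ y in Ioi (0 : ℝ), ∫ t in Ioi (0 : ℝ), F t y := by
        simp only [← hF]
        exact integral_integral_swap hint
    _ = ∫ y in Ioi (0 : ℝ), Gamma (1 - s / 2) / 2 * (y ^ (s / 2 - 1) * exp (-(a ^ 2 * y))) :=
        setIntegral_congr_fun measurableSet_Ioi fun y (hy : 0 < y) =>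
          integral_rpow_mul_exp_neg_sq_add_sq_mul hs2 hy
    _ = Gamma (1 - s / 2) / 2 * ((1 / a ^ 2) ^ (s / 2) * Gamma (s / 2)) := by
        rw [integral_const_mul, integral_rpow_mul_exp_neg_mul_Ioi (by linarith) (by positivity)]
    _ = a ^ (-s) * (π / (2 * sin (π * s / 2))) := by
        have hrefl := Gamma_mul_Gamma_one_sub (s / 2)
        have hpow : (1 / a ^ 2) ^ (s / 2) = a ^ (-s) := by
          rw [one_div, ← rpow_two, ← rpow_neg ha.le, ← rpow_mul ha.le]
          ring_nf
        rw [hpow, mul_comm 2, ← div_div, show π * s / 2 = π * (s / 2) by ring, ← hrefl]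
        ring

lemma Gamma_one_sub_inv_mul_pi_div_two_sin {s : ℝ} (h : sin (π * s) ≠ 0) :
    (Gamma (1 - s))⁻¹ * (π / (2 * sin (π * s / 2))) = Gamma s * cos (π * s / 2) := by
  have hrefl := Gamma_mul_Gamma_one_sub s
  have hΓ : Gamma (1 - s) ≠ 0 := fun h0 => by
    simp [h0, h, pi_ne_zero, eq_comm (a := (0 : ℝ))] at hrefl
  rw [show π * s = 2 * (π * s / 2) by ring, sin_two_mul] at h hrefl
  set x := π * s / 2
  have hsin : sin x ≠ 0 := by contrapose! h; simp [h]
  rw [eq_div_iff h] at hrefl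
  calc (Gamma (1 - s))⁻¹ * (π / (2 * sin x))
      = (Gamma (1 - s))⁻¹ * (Gamma s * Gamma (1 - s) * (2 * sin x * cos x) / (2 * sin x)) := by
        rw [hrefl]
    _ = Gamma s * cos x := by field_simp

open Filter Real in
theorem mellin_cos (s a : ℝ) (hs : 0 < s) (hs1 : s < 1) (ha : 0 < a) :
    Tendsto (fun T : ℝ => ∫ x in (0 : ℝ)..T, x ^ (s - 1) * Real.cos (a * x)) atTop
      (nhds (a ^ (-s) * Real.Gamma s * Real.cos (π * s / 2))) := by
  have hsin : sin (π * s) ≠ 0 :=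
    (sin_pos_of_pos_of_lt_pi (by positivity) (by nlinarith [pi_pos])).ne'
  have hlim := (tendsto_integral_rpow_neg_mul_integral_exp_neg_mul_mul_cos hs hs1
    ha.ne').const_mul (Gamma (1 - s))⁻¹
  rw [integral_rpow_div_sq_add_sq hs (by linarith) ha, mul_left_comm,
    Gamma_one_sub_inv_mul_pi_div_two_sin hsin, ← mul_assoc] at hlim
  refine hlim.congr' ?_
  filter_upwards [eventually_ge_atTop 0] with T hT
  exact (intervalIntegral_rpow_mul_eq_integral_Ioi hs hs1 (by fun_prop) hT).symm
end

section
/- For real $s > 0$ and reals $a > 0$, $n > 0$: $\int_0^{\infty} x^{s-1} e^{-ax} \sin(nx)\, dx = \frac{\Gamma(s)\,\sin\left(s \arctan(n/a)\right)}{(a^2+n^2)^{s/2}}$. -/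
/-!
Both sides of `∫₀^∞ t^(s-1) e^(-b t) dt = Γ(s) b^(-s)` are holomorphic in `b` on the right
half-plane (the left side is the complex moment generating function of `t ↦ -t` under the
measure `t^(s-1) dt` on `(0, ∞)`), and they agree for real `b > 0` by the Gamma integral. By the
identity theorem they agree at `b = a - n i`; taking imaginary parts, with
`‖b‖ = √(a² + n²)` and `arg b = -arctan (n / a)`, gives the formula.
-/

open MeasureTheory Set Filter Topology ProbabilityTheory Complex

noncomputable def rpowDensityMeasure (s : ℝ) : Measure ℝ :=
  (volume.restrict (Ioi 0)).withDensity fun t => ENNReal.ofReal (t ^ (s - 1))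

section RpowDensityMeasure

variable {s : ℝ} {E : Type*} [NormedAddCommGroup E] [NormedSpace ℝ E]

lemma integrable_rpowDensityMeasure_iff {g : ℝ → E} :
    Integrable g (rpowDensityMeasure s) ↔ IntegrableOn (fun t => t ^ (s - 1) • g t) (Ioi 0) := by
  rw [rpowDensityMeasure, integrable_withDensity_iff_integrable_smul' (by fun_prop)
    (ae_of_all _ fun _ => ENNReal.ofReal_lt_top)]
  refine integrableOn_congr_fun (fun t ht => ?_) measurableSet_Ioi
  simp only [ENNReal.toReal_ofReal (Real.rpow_nonneg (le_of_lt ht) _)]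

lemma integral_rpowDensityMeasure (g : ℝ → E) :
    ∫ t, g t ∂rpowDensityMeasure s = ∫ t in Ioi 0, t ^ (s - 1) • g t := by
  rw [rpowDensityMeasure, integral_withDensity_eq_integral_toReal_smul (by fun_prop)
    (ae_of_all _ fun _ => ENNReal.ofReal_lt_top)]
  refine setIntegral_congr_fun measurableSet_Ioi fun t ht => ?_
  simp only [ENNReal.toReal_ofReal (Real.rpow_nonneg (le_of_lt ht) _)]

lemma Ioi_subset_integrableExpSet_neg_rpowDensityMeasure (hs : 0 < s) :
    Ioi 0 ⊆ integrableExpSet (fun t => -t) (rpowDensityMeasure s) := fun u hu => by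
  rw [integrableExpSet, mem_ofPred_eq, integrable_rpowDensityMeasure_iff]
  simpa [mul_neg, ← neg_mul] using
    integrableOn_rpow_mul_exp_neg_mul_rpow (p := 1) (by linarith : -1 < s - 1) one_pos hu

lemma complexMGF_neg_rpowDensityMeasure (b : ℂ) :
    complexMGF (fun t => -t) (rpowDensityMeasure s) b =
      ∫ t in Ioi 0, ((t ^ (s - 1) : ℝ) : ℂ) * cexp (-(b * t)) := by
  rw [complexMGF, integral_rpowDensityMeasure]
  simp [Complex.real_smul]

end RpowDensityMeasure

theorem AnalyticOnNhd.eqOn_re_pos_of_eq_ofReal {E : Type*} [NormedAddCommGroup E]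
    [NormedSpace ℂ E] [CompleteSpace E] {f g : ℂ → E}
    (hf : AnalyticOnNhd ℂ f {z | 0 < z.re}) (hg : AnalyticOnNhd ℂ g {z | 0 < z.re})
    (hfg : ∀ r : ℝ, 0 < r → f r = g r) : EqOn f g {z | 0 < z.re} := by
  have hofReal : Tendsto ((↑) : ℝ → ℂ) (𝓝[≠] 1) (𝓝[≠] 1) :=
    tendsto_nhdsWithin_of_tendsto_nhds_of_eventually_within _
      (continuous_ofReal.tendsto' 1 1 ofReal_one |>.mono_left nhdsWithin_le_nhds)
      (eventually_nhdsWithin_of_forall fun r hr => by simpa using hr)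
  have hpos : ∀ᶠ r : ℝ in 𝓝[≠] 1, 0 < r := nhdsWithin_le_nhds (lt_mem_nhds one_pos)
  exact hf.eqOn_of_preconnected_of_frequently_eq hg (convex_halfSpace_re_gt 0).isPreconnected
    (by simp : (0 : ℝ) < (1 : ℂ).re) (hofReal.frequently (hpos.mono hfg).frequently)

section LaplaceRpow

variable {s : ℝ} {b : ℂ}

lemma integrableOn_rpow_mul_cexp_neg_mul_Ioi (hs : 0 < s) (hb : 0 < b.re) :
    IntegrableOn (fun t : ℝ => ((t ^ (s - 1) : ℝ) : ℂ) * cexp (-(b * t))) (Ioi 0) := by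
  have h := integrable_cexp_mul_of_re_mem_integrableExpSet (by fun_prop)
    (Ioi_subset_integrableExpSet_neg_rpowDensityMeasure hs hb)
  rw [integrable_rpowDensityMeasure_iff] at h
  simpa [Complex.real_smul] using h

lemma analyticOnNhd_integral_rpow_mul_cexp_neg_mul_Ioi (hs : 0 < s) :
    AnalyticOnNhd ℂ (fun b : ℂ => ∫ t in Ioi 0, ((t ^ (s - 1) : ℝ) : ℂ) * cexp (-(b * t)))
      {z | 0 < z.re} := by
  simp_rw [← complexMGF_neg_rpowDensityMeasure]
  exact analyticOnNhd_complexMGF.mono fun z (hz : 0 < z.re) =>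
    interior_mono (Ioi_subset_integrableExpSet_neg_rpowDensityMeasure hs)
      (isOpen_Ioi.subset_interior_iff.mpr subset_rfl hz)

lemma integral_rpow_mul_cexp_neg_ofReal_mul_Ioi (hs : 0 < s) {r : ℝ} (hr : 0 < r) :
    ∫ t in Ioi 0, ((t ^ (s - 1) : ℝ) : ℂ) * cexp (-(r * t)) = Real.Gamma s * (r : ℂ) ^ (-(s : ℂ)) :=
  calc ∫ t in Ioi 0, ((t ^ (s - 1) : ℝ) : ℂ) * cexp (-(r * t))
      = ((∫ t in Ioi 0, t ^ (s - 1) * Real.exp (-(r * t)) : ℝ) : ℂ) := by norm_cast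
    _ = Real.Gamma s * (r : ℂ) ^ (-(s : ℂ)) := by
        rw [Real.integral_rpow_mul_exp_neg_mul_Ioi hs hr, one_div, Real.inv_rpow hr.le,
          ← Real.rpow_neg hr.le, mul_comm, ofReal_mul, ofReal_cpow hr.le, ofReal_neg]

theorem integral_rpow_mul_cexp_neg_mul_Ioi (hs : 0 < s) (hb : 0 < b.re) :
    ∫ t in Ioi 0, ((t ^ (s - 1) : ℝ) : ℂ) * cexp (-(b * t)) = Real.Gamma s * b ^ (-(s : ℂ)) := by
  have hpow : AnalyticOnNhd ℂ (fun z : ℂ => (Real.Gamma s : ℂ) * z ^ (-(s : ℂ))) {z | 0 < z.re} :=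
    DifferentiableOn.analyticOnNhd (fun z hz =>
      ((differentiableAt_id.cpow_const (Or.inl hz)).const_mul _).differentiableWithinAt)
      (isOpen_lt continuous_const continuous_re)
  exact (analyticOnNhd_integral_rpow_mul_cexp_neg_mul_Ioi hs).eqOn_re_pos_of_eq_ofReal hpow
    (fun r hr => integral_rpow_mul_cexp_neg_ofReal_mul_Ioi hs hr) hb

end LaplaceRpow

theorem Complex.arg_eq_arctan_of_re_pos {z : ℂ} (hz : 0 < z.re) :
    z.arg = Real.arctan (z.im / z.re) := by
  have h := abs_lt.mp (abs_arg_lt_pi_div_two_iff.mpr (Or.inl hz))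
  rw [← Real.arctan_tan h.1 h.2, tan_arg]

theorem mellin_exp_sin_general (s a n : ℝ) (hs : 0 < s) (ha : 0 < a) :
    ∫ x in Set.Ioi (0 : ℝ), x ^ (s - 1) * Real.exp (-a * x) * Real.sin (n * x) =
      Real.Gamma s * Real.sin (s * Real.arctan (n / a)) / (a ^ 2 + n ^ 2) ^ (s / 2) := by
  set b : ℂ := a - n * I
  have hb : 0 < b.re := by simpa [b] using ha
  have hintegrand : ∀ x : ℝ, x ^ (s - 1) * Real.exp (-a * x) * Real.sin (n * x) =
      (((x ^ (s - 1) : ℝ) : ℂ) * cexp (-(b * x))).im := by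
    intro x
    have hre : (-(b * x)).re = -a * x := by simp [b]
    have him : (-(b * x)).im = n * x := by simp [b]
    rw [im_ofReal_mul, exp_im, hre, him, mul_assoc]
  have hnorm : ‖b‖ = √(a ^ 2 + n ^ 2) := by simp [b, norm_eq_sqrt_sq_add_sq]
  have harg : b.arg = -Real.arctan (n / a) := by
    rw [arg_eq_arctan_of_re_pos hb]
    simp [b, neg_div]
  calc ∫ x in Ioi 0, x ^ (s - 1) * Real.exp (-a * x) * Real.sin (n * x)
      = (∫ x in Ioi 0, ((x ^ (s - 1) : ℝ) : ℂ) * cexp (-(b * x))).im := by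
        simp_rw [hintegrand]
        exact integral_im (integrableOn_rpow_mul_cexp_neg_mul_Ioi hs hb)
    _ = Real.Gamma s * (‖b‖ ^ (-s) * Real.sin (b.arg * -s)) := by
        rw [integral_rpow_mul_cexp_neg_mul_Ioi hs hb, ← ofReal_neg, im_ofReal_mul, cpow_ofReal_im]
    _ = Real.Gamma s * Real.sin (s * Real.arctan (n / a)) / (a ^ 2 + n ^ 2) ^ (s / 2) := by
        rw [hnorm, harg, Real.sqrt_eq_rpow, ← Real.rpow_mul (by positivity),
          show (1 / 2 : ℝ) * -s = -(s / 2) by ring, Real.rpow_neg (by positivity), neg_mul_neg,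
          mul_comm (Real.arctan _) s]
        ring

theorem mellin_exp_sin (s a n : ℝ) (hs : 0 < s) (ha : 0 < a) (hn : 0 < n) :
    ∫ x in Set.Ioi (0 : ℝ), x ^ (s - 1) * Real.exp (-a * x) * Real.sin (n * x) =
      Real.Gamma s * Real.sin (s * Real.arctan (n / a)) / (a ^ 2 + n ^ 2) ^ (s / 2) :=
  mellin_exp_sin_general s a n hs ha
end
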